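/- For any monotone partiality strategy σ and any depth t, the expected consumption E[con(Z)] of a random t-deep history generated by the Markov chain with quality q is a non-decreasing function of q ∈ [0,1]. -/

import Mathlib

/-- Round outcomes: success, no consumption, failure. -/
inductive Ev : Type
  | S : Ev
  | N : Ev
  | F : Ev
deriving DecidableEq

instance instFintypeEv : Fintype Ev :=
  ⟨{Ev.S, Ev.N, Ev.F}, fun x => by cases x <;> simp⟩

/-- A history is a finite sequence of round outcomes. -/
abbrev Hist := List Ev

/-- The digest of a history: the subsequence of non-`N` entries. -/
def dig (Z : Hist) : Hist := Z.filter (fun v => v ≠ Ev.N)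

/-- Consumption: the number of non-`N` entries. -/
def con (Z : Hist) : ℕ := (dig Z).length

/-- Number of successes. -/
def Scount (Z : Hist) : ℕ := (Z.filter (fun v => v = Ev.S)).length

/-- Number of failures. -/
def Fcount (Z : Hist) : ℕ := (Z.filter (fun v => v = Ev.F)).length

/-- `Superior Z1 Z2` : equal depth, equal consumption, and no digest index
where `Z1` has `F` while `Z2` has `S`. -/
def Superior (Z1 Z2 : Hist) : Prop :=
  Z1.length = Z2.length ∧ con Z1 = con Z2 ∧
    ∀ i : ℕ, ¬ ((dig Z1)[i]? = some Ev.F ∧ (dig Z2)[i]? = some Ev.S)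

/-- Helper for the ex-ante function: current prefix, remaining events. -/
def exAnteFrom (σ : Hist → ℝ) : Hist → Hist → ℝ
  | _, [] => 1
  | pre, v :: rest =>
      (if v = Ev.N then 1 - σ pre else σ pre) * exAnteFrom σ (pre ++ [v]) rest

/-- The ex-ante function `c` of a partiality strategy `σ`:
`c(empty)=1`, `c(ZV)=σ(Z)c(Z)` for `V∈{S,F}`, `c(ZN)=(1-σ(Z))c(Z)`. -/
def exAnte (σ : Hist → ℝ) (Z : Hist) : ℝ := exAnteFrom σ [] Z

/-- Probability of a full history under the Markov chain with quality `q`. -/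
def histProb (σ : Hist → ℝ) (q : ℝ) (Z : Hist) : ℝ :=
  exAnte σ Z * q ^ Scount Z * (1 - q) ^ Fcount Z

/-- A strategy takes values in `[0,1]`. -/
def ValidStrat (σ : Hist → ℝ) : Prop := ∀ Z, σ Z ∈ Set.Icc (0 : ℝ) 1

/-- A monotone partiality strategy. -/
def MonotoneStrat (σ : Hist → ℝ) : Prop :=
  ∀ Z1 Z2, Superior Z1 Z2 → σ Z2 ≤ σ Z1

/- ===== auxiliary development ===== -/

def evOf (b : Bool) : Ev := if b then Ev.S else Ev.F

@[simp] lemma evOf_ne_N (b : Bool) : evOf b ≠ Ev.N := by cases b <;> simp [evOf]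

@[simp] lemma dig_append_evOf (Z : Hist) (b : Bool) :
    dig (Z ++ [evOf b]) = dig Z ++ [evOf b] := by
  cases b <;> simp [dig, evOf, List.filter_append]

@[simp] lemma dig_append_N (Z : Hist) : dig (Z ++ [Ev.N]) = dig Z := by
  simp [dig, List.filter_append]

@[simp] lemma con_append_evOf (Z : Hist) (b : Bool) :
    con (Z ++ [evOf b]) = con Z + 1 := by simp [con]

@[simp] lemma con_append_N (Z : Hist) : con (Z ++ [Ev.N]) = con Z := by simp [con]

def D (σ : Hist → ℝ) : Hist → ℕ → List Bool → ℝ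
  | _, _, [] => 1
  | _, 0, _ :: _ => 0
  | pre, r+1, b :: w =>
      σ pre * D σ (pre ++ [evOf b]) r w + (1 - σ pre) * D σ (pre ++ [Ev.N]) r (b :: w)

@[simp] lemma D_nil (σ : Hist → ℝ) (pre : Hist) (r : ℕ) : D σ pre r [] = 1 := by
  cases r <;> rfl

@[simp] lemma D_zero_cons (σ : Hist → ℝ) (pre : Hist) (b : Bool) (w : List Bool) :
    D σ pre 0 (b :: w) = 0 := rfl

lemma D_succ_cons (σ : Hist → ℝ) (pre : Hist) (r : ℕ) (b : Bool) (w : List Bool) :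
    D σ pre (r+1) (b :: w) =
      σ pre * D σ (pre ++ [evOf b]) r w + (1 - σ pre) * D σ (pre ++ [Ev.N]) r (b :: w) := rfl

lemma D_nonneg {σ : Hist → ℝ} (hval : ValidStrat σ) :
    ∀ (r : ℕ) (pre : Hist) (w : List Bool), 0 ≤ D σ pre r w := by
  intro r
  induction r with
  | zero => intro pre w; cases w <;> simp
  | succ r ih =>
    intro pre w
    cases w with
    | nil => simp
    | cons b w =>
      rw [D_succ_cons]
      have h1 := (hval pre).1; have h2 := (hval pre).2
      have := ih (pre ++ [evOf b]) w
      have := ih (pre ++ [Ev.N]) (b :: w)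
      nlinarith

lemma D_le_one {σ : Hist → ℝ} (hval : ValidStrat σ) :
    ∀ (r : ℕ) (pre : Hist) (w : List Bool), D σ pre r w ≤ 1 := by
  intro r
  induction r with
  | zero => intro pre w; cases w <;> simp
  | succ r ih =>
    intro pre w
    cases w with
    | nil => simp
    | cons b w =>
      rw [D_succ_cons]
      have h1 := (hval pre).1; have h2 := (hval pre).2
      have := ih (pre ++ [evOf b]) w
      have := ih (pre ++ [Ev.N]) (b :: w)
      nlinarith

def NoFS (A B : List Ev) : Prop :=
  ∀ i : ℕ, ¬ (A[i]? = some Ev.F ∧ B[i]? = some Ev.S)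

lemma noFS_refl (A : List Ev) : NoFS A A := by
  intro i ⟨h1, h2⟩; rw [h1] at h2; simp at h2

lemma D_mono {σ : Hist → ℝ} (hval : ValidStrat σ) (hmono : MonotoneStrat σ) :
    ∀ (r : ℕ) (Z Z' : Hist) (w w' : List Bool),
      Z.length = Z'.length →
      con Z + w.length = con Z' + w'.length →
      w'.length ≤ w.length →
      NoFS (dig Z' ++ w'.map evOf) (dig Z ++ w.map evOf) →
      D σ Z r w ≤ D σ Z' r w' := by
  intro r
  induction r with
  | zero =>
    intro Z Z' w w' _ _ hle _
    cases w' with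
    | nil => simpa using D_le_one hval 0 Z w
    | cons b' w' =>
      cases w with
      | nil => simp at hle
      | cons b w => simpa using D_nonneg hval 0 Z' (b' :: w')
  | succ r ih =>
    intro Z Z' w w' hZl hcon hle hNoFS
    cases w' with
    | nil => simpa using D_le_one hval (r+1) Z w
    | cons b' rest' =>
      cases w with
      | nil => simp at hle
      | cons b rest =>
        rw [D_succ_cons, D_succ_cons]
        have hσZ := hval Z; have hσZ' := hval Z'
        -- transported NoFS facts
        have hNFS1 : NoFS (dig (Z' ++ [evOf b']) ++ rest'.map evOf)
            (dig (Z ++ [evOf b]) ++ rest.map evOf) := by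
          simpa [List.append_assoc] using hNoFS
        have hNFS2 : NoFS (dig (Z' ++ [Ev.N]) ++ (b' :: rest').map evOf)
            (dig (Z ++ [Ev.N]) ++ (b :: rest).map evOf) := by
          simpa using hNoFS
        have hNFS3 : NoFS (dig (Z ++ [evOf b]) ++ rest.map evOf)
            (dig (Z ++ [Ev.N]) ++ (b :: rest).map evOf) := by
          simpa [List.append_assoc] using noFS_refl (dig Z ++ evOf b :: rest.map evOf)
        have hNFS4 : NoFS (dig (Z' ++ [evOf b']) ++ rest'.map evOf)
            (dig (Z ++ [Ev.N]) ++ (b :: rest).map evOf) := by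
          simpa [List.append_assoc] using hNoFS
        have hNFS5 : NoFS (dig (Z' ++ [Ev.N]) ++ (b' :: rest').map evOf)
            (dig (Z ++ [evOf b]) ++ rest.map evOf) := by
          simpa [List.append_assoc] using hNoFS
        simp only [List.length_cons] at hcon hle
        by_cases hEq : rest.length = rest'.length
        · -- equal consumption case
          have hconZ : con Z = con Z' := by omega
          have hsup : Superior Z' Z := by
            refine ⟨hZl.symm, by simpa [con] using hconZ.symm, ?_⟩
            intro i ⟨h1, h2⟩
            have hi : i < (dig Z).length :=
              (List.getElem?_eq_some_iff.mp h2).1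
            have hi' : i < (dig Z').length := by
              have : (dig Z).length = (dig Z').length := hconZ
              omega
            exact hNoFS i ⟨by rw [List.getElem?_append_left hi']; exact h1,
              by rw [List.getElem?_append_left hi]; exact h2⟩
          have hσ : σ Z ≤ σ Z' := hmono Z' Z hsup
          have hA : D σ (Z ++ [evOf b]) r rest ≤ D σ (Z' ++ [evOf b']) r rest' :=
            ih _ _ _ _ (by simp [hZl]) (by simp; omega) (by omega) hNFS1
          have hB : D σ (Z ++ [Ev.N]) r (b :: rest) ≤ D σ (Z' ++ [Ev.N]) r (b' :: rest') :=
            ih _ _ _ _ (by simp [hZl]) (by simp; omega) (by simp; omega) hNFS2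
          have hBA : D σ (Z ++ [Ev.N]) r (b :: rest) ≤ D σ (Z ++ [evOf b]) r rest :=
            ih _ _ _ _ (by simp) (by simp; omega) (by simp) hNFS3
          have h0 := D_nonneg hval r (Z ++ [Ev.N]) (b :: rest)
          nlinarith [mul_le_mul_of_nonneg_left hA hσZ'.1,
            mul_le_mul_of_nonneg_left hB (by linarith [hσZ'.2] : (0:ℝ) ≤ 1 - σ Z')]
        · -- Z' has consumed strictly more
          have hlt : rest'.length < rest.length := by omega
          have hAA' : D σ (Z ++ [evOf b]) r rest ≤ D σ (Z' ++ [evOf b']) r rest' :=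
            ih _ _ _ _ (by simp [hZl]) (by simp; omega) (by omega) hNFS1
          have hBA' : D σ (Z ++ [Ev.N]) r (b :: rest) ≤ D σ (Z' ++ [evOf b']) r rest' :=
            ih _ _ _ _ (by simp [hZl]) (by simp; omega) (by simp; omega) hNFS4
          have hAB' : D σ (Z ++ [evOf b]) r rest ≤ D σ (Z' ++ [Ev.N]) r (b' :: rest') :=
            ih _ _ _ _ (by simp [hZl]) (by simp; omega) (by simp; omega) hNFS5
          have hBB' : D σ (Z ++ [Ev.N]) r (b :: rest) ≤ D σ (Z' ++ [Ev.N]) r (b' :: rest') :=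
            ih _ _ _ _ (by simp [hZl]) (by simp; omega) (by simp; omega) hNFS2
          set A := D σ (Z ++ [evOf b]) r rest
          set B := D σ (Z ++ [Ev.N]) r (b :: rest)
          set A' := D σ (Z' ++ [evOf b']) r rest'
          set B' := D σ (Z' ++ [Ev.N]) r (b' :: rest')
          have hC : (0:ℝ) ≤ 1 - σ Z := by linarith [hσZ.2]
          have hC' : (0:ℝ) ≤ 1 - σ Z' := by linarith [hσZ'.2]
          have h1 : σ Z * A + (1 - σ Z) * B ≤ A' := by
            nlinarith [mul_nonneg hσZ.1 (sub_nonneg.2 hAA'),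
              mul_nonneg hC (sub_nonneg.2 hBA')]
          have h2 : σ Z * A + (1 - σ Z) * B ≤ B' := by
            nlinarith [mul_nonneg hσZ.1 (sub_nonneg.2 hAB'),
              mul_nonneg hC (sub_nonneg.2 hBB')]
          nlinarith [mul_nonneg hσZ'.1 (sub_nonneg.2 h1),
            mul_nonneg hC' (sub_nonneg.2 h2)]

def Phi : (x : ℕ) → ((Fin x → Bool) → ℝ) → ℝ → ℝ
  | 0, g, _ => g Fin.elim0
  | x+1, g, q =>
      q * Phi x (fun v => g (Fin.cons true v)) q
        + (1 - q) * Phi x (fun v => g (Fin.cons false v)) q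

lemma Phi_congr : ∀ (x : ℕ) (g h : (Fin x → Bool) → ℝ) (q : ℝ),
    (∀ v, g v = h v) → Phi x g q = Phi x h q := by
  intro x
  induction x with
  | zero => intro g h q hgh; exact hgh _
  | succ x ih =>
    intro g h q hgh
    show _ = _
    unfold Phi
    rw [ih _ (fun v => h (Fin.cons true v)) q (fun v => hgh _),
        ih _ (fun v => h (Fin.cons false v)) q (fun v => hgh _)]

lemma Phi_comb : ∀ (x : ℕ) (a b : ℝ) (g h : (Fin x → Bool) → ℝ) (q : ℝ),
    Phi x (fun v => a * g v + b * h v) q = a * Phi x g q + b * Phi x h q := by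
  intro x
  induction x with
  | zero => intro a b g h q; rfl
  | succ x ih =>
    intro a b g h q
    unfold Phi
    rw [ih, ih]
    ring

lemma Phi_le : ∀ (x : ℕ) (g h : (Fin x → Bool) → ℝ) (q : ℝ),
    0 ≤ q → q ≤ 1 → (∀ v, g v ≤ h v) → Phi x g q ≤ Phi x h q := by
  intro x
  induction x with
  | zero => intro g h q _ _ hgh; exact hgh _
  | succ x ih =>
    intro g h q hq0 hq1 hgh
    unfold Phi
    have h1 := ih (fun v => g (Fin.cons true v)) (fun v => h (Fin.cons true v)) q hq0 hq1
      (fun v => hgh _)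
    have h2 := ih (fun v => g (Fin.cons false v)) (fun v => h (Fin.cons false v)) q hq0 hq1
      (fun v => hgh _)
    have : (0:ℝ) ≤ 1 - q := by linarith
    nlinarith

lemma Phi_mono_q : ∀ (x : ℕ) (g : (Fin x → Bool) → ℝ),
    (∀ v v' : Fin x → Bool, (∀ i, v i = true → v' i = true) → g v ≤ g v') →
    ∀ q q' : ℝ, 0 ≤ q → q ≤ q' → q' ≤ 1 → Phi x g q ≤ Phi x g q' := by
  intro x
  induction x with
  | zero => intro g _ q q' _ _ _; rfl
  | succ x ih =>
    intro g hg q q' hq0 hqq hq1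
    unfold Phi
    have hmT : ∀ v v' : Fin x → Bool, (∀ i, v i = true → v' i = true) →
        g (Fin.cons true v) ≤ g (Fin.cons true v') := by
      intro v v' hvv
      apply hg
      intro i
      refine Fin.cases ?_ ?_ i <;> simp [Fin.cons_zero, Fin.cons_succ]
      exact hvv
    have hmF : ∀ v v' : Fin x → Bool, (∀ i, v i = true → v' i = true) →
        g (Fin.cons false v) ≤ g (Fin.cons false v') := by
      intro v v' hvv
      apply hg
      intro i
      refine Fin.cases ?_ ?_ i <;> simp [Fin.cons_zero, Fin.cons_succ]
      exact hvv
    have hT := ih _ hmT q q' hq0 hqq hq1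
    have hF := ih _ hmF q q' hq0 hqq hq1
    have hTF : Phi x (fun v => g (Fin.cons false v)) q ≤
        Phi x (fun v => g (Fin.cons true v)) q := by
      apply Phi_le _ _ _ _ hq0 (by linarith)
      intro v
      apply hg
      intro i
      refine Fin.cases ?_ ?_ i <;> simp [Fin.cons_zero, Fin.cons_succ]
    nlinarith [mul_le_mul_of_nonneg_left hT (by linarith : (0:ℝ) ≤ q'),
      mul_le_mul_of_nonneg_left hF (by linarith : (0:ℝ) ≤ 1 - q'),
      mul_nonneg (by linarith : (0:ℝ) ≤ q' - q) (sub_nonneg.2 hTF)]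

lemma ofFn_cons {α : Type*} (n : ℕ) (b : α) (v : Fin n → α) :
    List.ofFn (Fin.cons b v) = b :: List.ofFn v := by
  simp [List.ofFn_succ]

def Vd (σ : Hist → ℝ) (pre : Hist) (r x : ℕ) (q : ℝ) : ℝ :=
  Phi x (fun v => D σ pre r (List.ofFn v)) q

@[simp] lemma Vd_zero_x (σ : Hist → ℝ) (pre : Hist) (r : ℕ) (q : ℝ) :
    Vd σ pre r 0 q = 1 := by
  simp [Vd, Phi]

lemma Phi_zero : ∀ (x : ℕ) (q : ℝ), Phi x (fun _ => (0:ℝ)) q = 0 := by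
  intro x
  induction x with
  | zero => intro q; rfl
  | succ x ih =>
    intro q
    show q * Phi x (fun _ => (0:ℝ)) q + (1 - q) * Phi x (fun _ => (0:ℝ)) q = 0
    rw [ih]; ring

lemma Vd_zero_r (σ : Hist → ℝ) (pre : Hist) (x : ℕ) (q : ℝ) :
    Vd σ pre 0 (x+1) q = 0 := by
  unfold Vd
  rw [Phi_congr _ _ (fun _ => 0) q ?_, Phi_zero]
  intro v
  rw [List.ofFn_succ]
  simp

lemma Vd_succ (σ : Hist → ℝ) (pre : Hist) (r x : ℕ) (q : ℝ) :
    Vd σ pre (r+1) (x+1) q =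
      σ pre * (q * Vd σ (pre ++ [Ev.S]) r x q + (1 - q) * Vd σ (pre ++ [Ev.F]) r x q)
        + (1 - σ pre) * Vd σ (pre ++ [Ev.N]) r (x+1) q := by
  unfold Vd
  show q * Phi x (fun v => D σ pre (r+1) (List.ofFn (Fin.cons true v))) q
      + (1 - q) * Phi x (fun v => D σ pre (r+1) (List.ofFn (Fin.cons false v))) q = _
  have e1 : ∀ v : Fin x → Bool, D σ pre (r+1) (List.ofFn (Fin.cons true v)) =
      σ pre * D σ (pre ++ [Ev.S]) r (List.ofFn v)
        + (1 - σ pre) * D σ (pre ++ [Ev.N]) r (true :: List.ofFn v) := by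
    intro v; rw [ofFn_cons, D_succ_cons]; rfl
  have e2 : ∀ v : Fin x → Bool, D σ pre (r+1) (List.ofFn (Fin.cons false v)) =
      σ pre * D σ (pre ++ [Ev.F]) r (List.ofFn v)
        + (1 - σ pre) * D σ (pre ++ [Ev.N]) r (false :: List.ofFn v) := by
    intro v; rw [ofFn_cons, D_succ_cons]; rfl
  rw [Phi_congr _ _ _ q e1, Phi_congr _ _ _ q e2, Phi_comb, Phi_comb]
  have e3 : Phi (x+1) (fun v => D σ (pre ++ [Ev.N]) r (List.ofFn v)) q =
      q * Phi x (fun v => D σ (pre ++ [Ev.N]) r (true :: List.ofFn v)) q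
        + (1 - q) * Phi x (fun v => D σ (pre ++ [Ev.N]) r (false :: List.ofFn v)) q := by
    show q * Phi x (fun v => D σ (pre ++ [Ev.N]) r (List.ofFn (Fin.cons true v))) q
        + (1 - q) * Phi x (fun v => D σ (pre ++ [Ev.N]) r (List.ofFn (Fin.cons false v))) q = _
    rw [Phi_congr x (fun v => D σ (pre ++ [Ev.N]) r (List.ofFn (Fin.cons true v)))
          (fun v => D σ (pre ++ [Ev.N]) r (true :: List.ofFn v)) q
          (fun v => by simp only [ofFn_cons]),
        Phi_congr x (fun v => D σ (pre ++ [Ev.N]) r (List.ofFn (Fin.cons false v)))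
          (fun v => D σ (pre ++ [Ev.N]) r (false :: List.ofFn v)) q
          (fun v => by simp only [ofFn_cons])]
  rw [e3]
  ring

lemma Vd_gt (σ : Hist → ℝ) (q : ℝ) :
    ∀ (r : ℕ) (pre : Hist) (x : ℕ), r < x → Vd σ pre r x q = 0 := by
  intro r
  induction r with
  | zero =>
    intro pre x hx
    obtain ⟨x, rfl⟩ : ∃ y, x = y + 1 := ⟨x - 1, by omega⟩
    exact Vd_zero_r σ pre x q
  | succ r ih =>
    intro pre x hx
    obtain ⟨x, rfl⟩ : ∃ y, x = y + 1 := ⟨x - 1, by omega⟩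
    rw [Vd_succ, ih _ x (by omega), ih _ x (by omega), ih _ (x+1) (by omega)]
    ring

def W (σ : Hist → ℝ) (q : ℝ) : Hist → ℕ → ℝ
  | _, 0 => 0
  | pre, r+1 =>
      σ pre * (q * (1 + W σ q (pre ++ [Ev.S]) r) + (1 - q) * (1 + W σ q (pre ++ [Ev.F]) r))
        + (1 - σ pre) * W σ q (pre ++ [Ev.N]) r

lemma W_eq_sum (σ : Hist → ℝ) (q : ℝ) :
    ∀ (r : ℕ) (pre : Hist), W σ q pre r = ∑ x ∈ Finset.range r, Vd σ pre r (x+1) q := by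
  intro r
  induction r with
  | zero => intro pre; simp [W]
  | succ r ih =>
    intro pre
    have hsum : ∀ pre', ∑ x ∈ Finset.range (r+1), Vd σ pre' r x q = 1 + W σ q pre' r := by
      intro pre'
      rw [Finset.sum_range_succ']
      simp [ih pre']
      ring
    rw [show W σ q pre (r+1) = σ pre * (q * (1 + W σ q (pre ++ [Ev.S]) r)
        + (1 - q) * (1 + W σ q (pre ++ [Ev.F]) r))
        + (1 - σ pre) * W σ q (pre ++ [Ev.N]) r from rfl]
    have key : ∑ x ∈ Finset.range (r+1), Vd σ pre (r+1) (x+1) q =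
        σ pre * (q * ∑ x ∈ Finset.range (r+1), Vd σ (pre ++ [Ev.S]) r x q
          + (1 - q) * ∑ x ∈ Finset.range (r+1), Vd σ (pre ++ [Ev.F]) r x q)
        + (1 - σ pre) * ∑ x ∈ Finset.range (r+1), Vd σ (pre ++ [Ev.N]) r (x+1) q := by
      rw [Finset.sum_congr rfl (fun x _ => Vd_succ σ pre r x q)]
      simp only [Finset.mul_sum, mul_add, add_mul, Finset.sum_add_distrib, mul_assoc]
    rw [key, hsum, hsum]
    have hN : ∑ x ∈ Finset.range (r+1), Vd σ (pre ++ [Ev.N]) r (x+1) q =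
        W σ q (pre ++ [Ev.N]) r := by
      rw [Finset.sum_range_succ, Vd_gt σ q r _ (r+1) (by omega), ih]
      ring
    rw [hN]

def stepW (σ : Hist → ℝ) (q : ℝ) (pre : Hist) : Ev → ℝ
  | Ev.S => σ pre * q
  | Ev.N => 1 - σ pre
  | Ev.F => σ pre * (1 - q)

def R (σ : Hist → ℝ) (q : ℝ) : Hist → List Ev → ℝ
  | _, [] => 1
  | pre, v :: l => stepW σ q pre v * R σ q (pre ++ [v]) l

lemma R_cons (σ : Hist → ℝ) (q : ℝ) (pre : Hist) (v : Ev) (l : List Ev) :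
    R σ q pre (v :: l) = stepW σ q pre v * R σ q (pre ++ [v]) l := rfl

lemma exAnte_R (σ : Hist → ℝ) (q : ℝ) :
    ∀ (l : List Ev) (pre : Hist),
      exAnteFrom σ pre l * q ^ Scount l * (1 - q) ^ Fcount l = R σ q pre l := by
  intro l
  induction l with
  | nil => intro pre; simp [exAnteFrom, Scount, Fcount, R]
  | cons v l ih =>
    intro pre
    rw [R_cons, ← ih (pre ++ [v])]
    cases v <;>
      simp [exAnteFrom, Scount, Fcount, List.filter_cons, stepW, pow_succ] <;> ring

lemma sum_ev (h : Ev → ℝ) : ∑ v : Ev, h v = h Ev.S + h Ev.N + h Ev.F := by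
  rw [show (Finset.univ : Finset Ev) = {Ev.S, Ev.N, Ev.F} from rfl]
  simp [Finset.sum_insert]
  ring

lemma sum_pi_succ (r : ℕ) (h : (Fin (r+1) → Ev) → ℝ) :
    ∑ f : Fin (r+1) → Ev, h f = ∑ v : Ev, ∑ g : Fin r → Ev, h (Fin.cons v g) := by
  rw [← (Fin.consEquiv (fun _ => Ev)).sum_comp h, Fintype.sum_prod_type]
  rfl

lemma sumR (σ : Hist → ℝ) (q : ℝ) :
    ∀ (r : ℕ) (pre : Hist), ∑ f : Fin r → Ev, R σ q pre (List.ofFn f) = 1 := by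
  intro r
  induction r with
  | zero => intro pre; simp [R]
  | succ r ih =>
    intro pre
    rw [sum_pi_succ r (fun f => R σ q pre (List.ofFn f))]
    have inner : ∀ v : Ev, ∑ g : Fin r → Ev, R σ q pre (List.ofFn (Fin.cons v g)) =
        stepW σ q pre v := by
      intro v
      calc ∑ g : Fin r → Ev, R σ q pre (List.ofFn (Fin.cons v g))
          = ∑ g : Fin r → Ev, stepW σ q pre v * R σ q (pre ++ [v]) (List.ofFn g) := by
            apply Finset.sum_congr rfl; intro g _; rw [ofFn_cons, R_cons]
        _ = stepW σ q pre v * ∑ g : Fin r → Ev, R σ q (pre ++ [v]) (List.ofFn g) := by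
            rw [Finset.mul_sum]
        _ = stepW σ q pre v := by rw [ih]; ring
    rw [Finset.sum_congr rfl (fun v _ => inner v), sum_ev]
    simp [stepW]
    ring

lemma con_cons (v : Ev) (l : List Ev) :
    con (v :: l) = (if v = Ev.N then 0 else 1) + con l := by
  cases v <;> simp [con, dig, List.filter_cons] <;> omega

lemma sumConR (σ : Hist → ℝ) (q : ℝ) :
    ∀ (r : ℕ) (pre : Hist),
      ∑ f : Fin r → Ev, (con (List.ofFn f) : ℝ) * R σ q pre (List.ofFn f) = W σ q pre r := by
  intro r
  induction r with
  | zero => intro pre; simp [con, dig, W]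
  | succ r ih =>
    intro pre
    rw [sum_pi_succ r (fun f => (con (List.ofFn f) : ℝ) * R σ q pre (List.ofFn f))]
    have inner : ∀ v : Ev,
        ∑ g : Fin r → Ev, (con (List.ofFn (Fin.cons v g)) : ℝ) *
            R σ q pre (List.ofFn (Fin.cons v g)) =
        stepW σ q pre v * ((if v = Ev.N then 0 else 1) + W σ q (pre ++ [v]) r) := by
      intro v
      calc ∑ g : Fin r → Ev, (con (List.ofFn (Fin.cons v g)) : ℝ) *
              R σ q pre (List.ofFn (Fin.cons v g))
          = ∑ g : Fin r → Ev,
              (stepW σ q pre v * (((if v = Ev.N then (0:ℝ) else 1)) *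
                  R σ q (pre ++ [v]) (List.ofFn g))
                + stepW σ q pre v * ((con (List.ofFn g) : ℝ) *
                  R σ q (pre ++ [v]) (List.ofFn g))) := by
            apply Finset.sum_congr rfl; intro g _
            rw [ofFn_cons, R_cons, con_cons]
            cases v <;> push_cast <;> simp <;> ring
        _ = stepW σ q pre v * ((if v = Ev.N then (0:ℝ) else 1) *
              ∑ g : Fin r → Ev, R σ q (pre ++ [v]) (List.ofFn g))
            + stepW σ q pre v *
              ∑ g : Fin r → Ev, (con (List.ofFn g) : ℝ) * R σ q (pre ++ [v]) (List.ofFn g) := by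
            rw [Finset.sum_add_distrib, ← Finset.mul_sum, ← Finset.mul_sum, ← Finset.mul_sum]
        _ = stepW σ q pre v * ((if v = Ev.N then 0 else 1) + W σ q (pre ++ [v]) r) := by
            rw [sumR, ih]; ring
    rw [Finset.sum_congr rfl (fun v _ => inner v), sum_ev]
    show stepW σ q pre Ev.S * _ + stepW σ q pre Ev.N * _ + stepW σ q pre Ev.F * _ =
      W σ q pre (r+1)
    rw [show W σ q pre (r+1) = σ pre * (q * (1 + W σ q (pre ++ [Ev.S]) r)
        + (1 - q) * (1 + W σ q (pre ++ [Ev.F]) r))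
        + (1 - σ pre) * W σ q (pre ++ [Ev.N]) r from rfl]
    simp [stepW]
    ring

lemma D_mono_w {σ : Hist → ℝ} (hval : ValidStrat σ) (hmono : MonotoneStrat σ)
    (t x : ℕ) (v v' : Fin x → Bool) (hvv : ∀ i, v i = true → v' i = true) :
    D σ [] t (List.ofFn v) ≤ D σ [] t (List.ofFn v') := by
  apply D_mono hval hmono t [] [] (List.ofFn v) (List.ofFn v') rfl (by simp) (by simp)
  intro i ⟨h1, h2⟩
  simp only [dig, List.filter_nil, List.nil_append] at h1 h2
  by_cases hi : i < x
  · rw [List.getElem?_map] at h1 h2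
    rw [List.getElem?_ofFn] at h1 h2
    simp only [List.ofFnNthVal, dif_pos hi, Option.map_some] at h1 h2
    have hv' : v' ⟨i, hi⟩ = false := by
      cases hb : v' ⟨i, hi⟩
      · rfl
      · rw [hb] at h1; exact absurd h1 (by simp [evOf])
    have hv : v ⟨i, hi⟩ = true := by
      cases hb : v ⟨i, hi⟩
      · rw [hb] at h2; exact absurd h2 (by simp [evOf])
      · rfl
    have := hvv ⟨i, hi⟩ hv
    rw [this] at hv'
    exact Bool.noConfusion hv'
  · rw [List.getElem?_eq_none (by simpa using not_lt.mp hi)] at h2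
    simp at h2


/-- for a monotone partiality strategy, the expected consumption
of a `t`-deep history is non-decreasing in the quality `q ∈ [0,1]`. -/
theorem expected_consumption_monotone (σ : Hist → ℝ) (hval : ValidStrat σ)
    (hmono : MonotoneStrat σ) (t : ℕ) :
    MonotoneOn
      (fun q : ℝ => ∑ f : Fin t → Ev,
        (con (List.ofFn f) : ℝ) * histProb σ q (List.ofFn f))
      (Set.Icc (0 : ℝ) 1) := by
  have E_eq : ∀ q : ℝ, (∑ f : Fin t → Ev,
      (con (List.ofFn f) : ℝ) * histProb σ q (List.ofFn f)) =
      ∑ x ∈ Finset.range t, Vd σ [] t (x+1) q := by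
    intro q
    rw [← W_eq_sum, ← sumConR σ q t []]
    apply Finset.sum_congr rfl
    intro f _
    rw [show histProb σ q (List.ofFn f) = R σ q [] (List.ofFn f) from
      exAnte_R σ q (List.ofFn f) []]
  intro q hq q' hq' hqq'
  simp only
  rw [E_eq q, E_eq q']
  apply Finset.sum_le_sum
  intro x _
  exact Phi_mono_q (x+1) _
    (fun v v' hvv => D_mono_w hval hmono t (x+1) v v' hvv) q q' hq.1 hqq' hq'.2
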